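/- arXiv:1712.06692 — 5 statements merged into one kernel-verified Lean document; each statement's English description precedes it below -/
import Mathlib

section
/- Two subgroups of a finite group in which all Sylow subgroups are cyclic are conjugate if and only if they have the same order. -/
/-!
Induction on `|G|`. Let `p` be the smallest prime divisor of `|G|` and `P` a Sylow `p`-subgroup.
As `P` is cyclic, Burnside's transfer theorem gives it a normal complement `N`. Since `|G : N|` is
a power of `p` and `p ∤ |N|`, the order of `H ⊓ N` is the `p'`-part of `|H|`, so `H ⊓ N` and
`K ⊓ N` are conjugate in `N` by induction; after conjugating `H`, both meet `N` in the same
subgroup `D`. If `D` is not normal, `H` and `K` lie in the proper subgroup `N_G(D)` and induction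
applies again. If `D` is normal, `H/D` and `K/D` are `p`-subgroups of `G/D` of equal order; they
are conjugate into one cyclic Sylow `p`-subgroup, in which a subgroup is determined by its order.
-/

open Subgroup Pointwise

namespace Subgroup

variable {G : Type*} [Group G]

lemma card_subgroupOf_of_le {H K : Subgroup G} (h : H ≤ K) :
    Nat.card (H.subgroupOf K) = Nat.card H :=
  Nat.card_congr (subgroupOfEquivOfLe h).toEquiv

lemma card_conj_smul (g : G) (H : Subgroup G) :
    Nat.card (MulAut.conj g • H : Subgroup G) = Nat.card H :=
  Nat.card_congr (equivSMul (MulAut.conj g) H).toEquiv.symm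

lemma card_inf_mul_relIndex (H K : Subgroup G) :
    Nat.card (H ⊓ K : Subgroup G) * K.relIndex H = Nat.card H := by
  simpa [relIndex_bot_left, inf_comm] using relIndex_inf_mul_relIndex ⊥ K H

lemma le_normalizer_inf_of_normal (H N : Subgroup G) [N.Normal] :
    H ≤ normalizer (H ⊓ N : Subgroup G) :=
  (le_inf le_normalizer le_normalizer_of_normal).trans inf_normalizer_le_normalizer_inf

lemma map_conj_smul {G' : Type*} [Group G'] (f : G →* G') (g : G) (H : Subgroup G) :
    (MulAut.conj g • H).map f = MulAut.conj (f g) • H.map f := by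
  ext
  simp [pointwise_smul_def]

lemma conj_smul_eq_of_subgroupOf {M H K : Subgroup G} (hH : H ≤ M) (hK : K ≤ M) {g : M}
    (h : MulAut.conj g • H.subgroupOf M = K.subgroupOf M) : MulAut.conj (g : G) • H = K := by
  rwa [conj_smul_subgroupOf hH, subgroupOf_inj, inf_of_le_left (conj_smul_le_of_le hH g),
    inf_of_le_left hK] at h

lemma exists_conj_smul_eq_of_map_mk' {D H K : Subgroup G} [D.Normal] (hH : D ≤ H) (hK : D ≤ K)
    {x : G ⧸ D} (h : MulAut.conj x • H.map (QuotientGroup.mk' D) = K.map (QuotientGroup.mk' D)) :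
    ∃ g : G, MulAut.conj g • H = K := by
  obtain ⟨g, rfl⟩ := QuotientGroup.mk'_surjective D x
  refine ⟨g, map_injective_of_ker_le (QuotientGroup.mk' D) ?_ ?_ ?_⟩
  · rw [QuotientGroup.ker_mk', ← Normal.conj_smul_eq_self g D]
    exact pointwise_smul_le_pointwise_smul_iff.mpr hH
  · rwa [QuotientGroup.ker_mk']
  · rwa [map_conj_smul]

end Subgroup

lemma IsCyclic.subgroup_eq_of_card_eq {G : Type*} [Group G] [Finite G] [IsCyclic G]
    {H K : Subgroup G} (h : Nat.card H = Nat.card K) : H = K := by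
  classical
  have := Fintype.ofFinite G
  suffices key : ∀ L : Subgroup G, (L : Set G) = {x | x ^ Nat.card L = 1} from
    SetLike.coe_injective ((key H).trans (h ▸ (key K).symm))
  intro L
  have hsub : (L : Set G) ⊆ {x | x ^ Nat.card L = 1} := fun x hx =>
    orderOf_dvd_iff_pow_eq_one.mp (L.orderOf_dvd_natCard hx)
  refine Set.eq_of_subset_of_ncard_le hsub ?_
  rw [← Nat.card_coe_set_eq (L : Set G), Set.ncard_eq_toFinset_card', Set.toFinset_ofPred]
  exact IsCyclic.card_pow_eq_one_le Nat.card_pos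

lemma Subgroup.eq_of_le_of_card_eq_of_isCyclic {G : Type*} [Group G] {P H K : Subgroup G}
    [Finite P] [IsCyclic P] (hH : H ≤ P) (hK : K ≤ P) (h : Nat.card H = Nat.card K) : H = K := by
  have := IsCyclic.subgroup_eq_of_card_eq (H := H.subgroupOf P) (K := K.subgroupOf P)
    (by rwa [card_subgroupOf_of_le hH, card_subgroupOf_of_le hK])
  rwa [subgroupOf_inj, inf_of_le_left hH, inf_of_le_left hK] at this

lemma IsPGroup.exists_conj_smul_eq_of_card_eq {G : Type*} [Group G] [Finite G] {p : ℕ}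
    [Fact p.Prime] (hcyc : ∀ P : Sylow p G, IsCyclic P) {H K : Subgroup G} (hH : IsPGroup p H)
    (hK : IsPGroup p K) (hHK : Nat.card H = Nat.card K) : ∃ g : G, MulAut.conj g • H = K := by
  obtain ⟨P, hHP⟩ := hH.exists_le_sylow
  obtain ⟨Q, hKQ⟩ := hK.exists_le_sylow
  obtain ⟨g, rfl⟩ := MulAction.exists_smul_eq G P Q
  have hgH : MulAut.conj g • H ≤ (g • P : Sylow p G) := by
    rw [Sylow.coe_subgroup_smul]
    exact pointwise_smul_le_pointwise_smul_iff.mpr hHP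
  have := hcyc (g • P)
  exact ⟨g, eq_of_le_of_card_eq_of_isCyclic hgH hKQ (by rw [card_conj_smul, hHK])⟩

def SubgroupsConjOfCardEq (G : Type*) [Group G] : Prop :=
  ∀ H K : Subgroup G, Nat.card H = Nat.card K → ∃ g : G, MulAut.conj g • H = K

namespace Subgroup.IsComplement'

variable {G : Type*} [Group G] [Finite G] {p : ℕ} [Fact p.Prime] {P : Sylow p G}
  {N : Subgroup G}

lemma not_dvd_card (hNP : N.IsComplement' P) : ¬ p ∣ Nat.card N :=
  hNP.index_eq_card ▸ P.not_dvd_index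

variable [N.Normal]

lemma exists_relIndex_eq_pow (hNP : N.IsComplement' P) (H : Subgroup G) :
    ∃ k, N.relIndex H = p ^ k := by
  obtain ⟨n, hn⟩ := P.2.exists_card_eq
  have hdvd : N.relIndex H ∣ p ^ n :=
    hn ▸ hNP.symm.index_eq_card ▸ relIndex_dvd_index_of_normal N H
  obtain ⟨k, -, hk⟩ := (Nat.dvd_prime_pow Fact.out).mp hdvd
  exact ⟨k, hk⟩

lemma card_inf_eq_ordCompl (hNP : N.IsComplement' P) (H : Subgroup G) :
    Nat.card (H ⊓ N : Subgroup G) = ordCompl[p] (Nat.card H) := by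
  obtain ⟨k, hk⟩ := hNP.exists_relIndex_eq_pow H
  rw [← card_inf_mul_relIndex H N, hk, mul_comm, Nat.ordCompl_pow_mul_of_not_dvd k Fact.out]
  exact fun h => hNP.not_dvd_card (h.trans (card_dvd_of_le inf_le_right))

lemma isPGroup_map_mk' (hNP : N.IsComplement' P) {H D : Subgroup G} [D.Normal]
    (hD : H ⊓ N = D) : IsPGroup p (H.map (QuotientGroup.mk' D)) := by
  obtain ⟨k, hk⟩ := hNP.exists_relIndex_eq_pow H
  refine IsPGroup.of_card (n := k) ?_
  rw [← relIndex_ker, QuotientGroup.ker_mk', ← hD, inf_relIndex_left, hk]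

lemma exists_conj_smul_inf_eq (hNP : N.IsComplement' P) (hN : SubgroupsConjOfCardEq N)
    {H K : Subgroup G} (hHK : Nat.card H = Nat.card K) :
    ∃ g : G, MulAut.conj g • H ⊓ N = K ⊓ N := by
  obtain ⟨g, hg⟩ := hN ((H ⊓ N).subgroupOf N) ((K ⊓ N).subgroupOf N) (by
    rw [card_subgroupOf_of_le inf_le_right, card_subgroupOf_of_le inf_le_right,
      hNP.card_inf_eq_ordCompl, hNP.card_inf_eq_ordCompl, hHK])
  have := conj_smul_eq_of_subgroupOf inf_le_right inf_le_right hg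
  exact ⟨g, by rwa [smul_inf, Normal.conj_smul_eq_self (g : G) N] at this⟩

lemma exists_conj_smul_eq_of_inf_eq_of_normal [IsZGroup G] (hNP : N.IsComplement' P)
    {H K : Subgroup G} (hHK : Nat.card H = Nat.card K) (hinf : H ⊓ N = K ⊓ N)
    [(K ⊓ N).Normal] : ∃ g : G, MulAut.conj g • H = K := by
  set D := K ⊓ N
  have hDH : D ≤ H := hinf ▸ inf_le_left
  have hDK : D ≤ K := inf_le_left
  have hcard :
      Nat.card (H.map (QuotientGroup.mk' D)) = Nat.card (K.map (QuotientGroup.mk' D)) := by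
    rw [← relIndex_ker, ← relIndex_ker, QuotientGroup.ker_mk']
    have eH := card_inf_mul_relIndex H D
    have eK := card_inf_mul_relIndex K D
    rw [inf_of_le_right hDH] at eH
    rw [inf_of_le_right hDK] at eK
    exact Nat.eq_of_mul_eq_mul_left Nat.card_pos (eH.trans (hHK.trans eK.symm))
  obtain ⟨x, hx⟩ := IsPGroup.exists_conj_smul_eq_of_card_eq (fun _ => inferInstance)
    (hNP.isPGroup_map_mk' hinf) (hNP.isPGroup_map_mk' rfl) hcard
  exact exists_conj_smul_eq_of_map_mk' hDH hDK hx

end Subgroup.IsComplement'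

theorem IsZGroup.subgroupsConjOfCardEq_of_forall_ne_top {G : Type*} [Group G] [Finite G]
    [IsZGroup G] (ih : ∀ M : Subgroup G, M ≠ ⊤ → SubgroupsConjOfCardEq M) :
    SubgroupsConjOfCardEq G := by
  intro H K hHK
  obtain _ | _ := subsingleton_or_nontrivial G
  · exact ⟨1, Subsingleton.elim _ _⟩
  set p := (Nat.card G).minFac with hp
  have : Fact p.Prime := ⟨Nat.minFac_prime Finite.one_lt_card.ne'⟩
  let P : Sylow p G := default
  have hPcyc : IsCyclic P := inferInstance
  let N := (MonoidHom.transferSylow P (hPcyc.normalizer_le_centralizer hp.symm)).ker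
  have hNP : N.IsComplement' P := hPcyc.isComplement' hp.symm
  have hN : N ≠ ⊤ := fun h =>
    P.ne_bot_of_dvd_card (Nat.minFac_dvd _) (isComplement'_top_left.mp (h ▸ hNP))
  obtain ⟨g₁, hg₁⟩ := hNP.exists_conj_smul_inf_eq (ih N hN) hHK
  set H₁ := MulAut.conj g₁ • H
  have hH₁K : Nat.card H₁ = Nat.card K := (card_conj_smul g₁ H).trans hHK
  suffices ∃ g : G, MulAut.conj g • H₁ = K by
    obtain ⟨g, hg⟩ := this
    exact ⟨g * g₁, by rw [map_mul, mul_smul, hg]⟩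
  by_cases hD : normalizer ((K ⊓ N : Subgroup G) : Set G) = ⊤
  · have : (K ⊓ N).Normal := normalizer_eq_top_iff.mp hD
    exact hNP.exists_conj_smul_eq_of_inf_eq_of_normal hH₁K hg₁
  · have hH₁ : H₁ ≤ normalizer ((K ⊓ N : Subgroup G) : Set G) :=
      hg₁ ▸ le_normalizer_inf_of_normal H₁ N
    have hK : K ≤ normalizer ((K ⊓ N : Subgroup G) : Set G) := le_normalizer_inf_of_normal K N
    obtain ⟨g, hg⟩ := ih _ hD (H₁.subgroupOf _) (K.subgroupOf _)
      (by rw [card_subgroupOf_of_le hH₁, card_subgroupOf_of_le hK, hH₁K])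
    exact ⟨g, conj_smul_eq_of_subgroupOf hH₁ hK hg⟩

theorem IsZGroup.subgroupsConjOfCardEq (G : Type*) [Group G] [Finite G] [IsZGroup G] :
    SubgroupsConjOfCardEq G := by
  induction h : Nat.card G using Nat.strong_induction_on generalizing G with
  | _ n ih =>
    subst h
    refine subgroupsConjOfCardEq_of_forall_ne_top fun M hM => ih _ ?_ M rfl
    exact (card_le_card_group M).lt_of_ne (mt (eq_top_of_card_eq M) hM)

/-- In a finite group all of whose Sylow subgroups are cyclic, two subgroups are
conjugate if and only if they have the same order. -/
theorem conj_iff_card_eq_of_sylow_cyclic {G : Type*} [Group G] [Finite G]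
    (hsyl : ∀ p : ℕ, p.Prime → ∀ P : Sylow p G, IsCyclic P)
    (H K : Subgroup G) :
    (∃ g : G, Subgroup.map (MulAut.conj g).toMonoidHom H = K) ↔
      Nat.card H = Nat.card K := by
  have : IsZGroup G := ⟨hsyl⟩
  exact ⟨fun ⟨g, hg⟩ => hg ▸ (card_conj_smul g H).symm, IsZGroup.subgroupsConjOfCardEq G H K⟩
end

section
/- The total number of subgroups of ZM(m,n,r) equals the sum over all divisors m₁ of m and n₁ of n of gcd(m₁, (r^n−1)/(r^{n₁}−1)). -/
/-- The relators of the Zassenhaus metacyclic group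
`ZM(m,n,r) = ⟨a, b | a^m = b^n = 1, b⁻¹ab = a^r⟩`. -/
def ZMrel (m n r : ℕ) : Set (FreeGroup (Fin 2)) :=
  {FreeGroup.of 0 ^ m, FreeGroup.of 1 ^ n,
   (FreeGroup.of 1)⁻¹ * FreeGroup.of 0 * FreeGroup.of 1 * (FreeGroup.of 0 ^ r)⁻¹}

/-- The ZM-group `ZM(m,n,r)` as a presented group. -/
abbrev ZM (m n r : ℕ) : Type := PresentedGroup (ZMrel m n r)

/-- The generator `a` of `ZM(m,n,r)`. -/
def za (m n r : ℕ) : ZM m n r := PresentedGroup.of 0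

/-- The generator `b` of `ZM(m,n,r)`. -/
def zb (m n r : ℕ) : ZM m n r := PresentedGroup.of 1

/-!
`ZM(m,n,r)` is the semidirect product `ℤ/m ⋊ ℤ/n` in which the generator of `ℤ/n` acts on `ℤ/m`
by multiplication by `r`. A subgroup `H` of it is determined by its intersection `⟨a^d⟩` with
`ℤ/m` (`d ∣ m`), its image `⟨b^k⟩` in `ℤ/n` (`k ∣ n`), and the class modulo `d` of `x` for any
`a^x b^k ∈ H`: indeed `H = ⟨a^d, a^x b^k⟩`. Conversely `⟨a^d, a^x b^k⟩` has exactly these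
invariants provided `(a^x b^k)^(n/k) = a^(x T)` lies in `⟨a^d⟩`, where
`T = 1 + r^k + ⋯ + r^(k(n/k - 1))`, i.e. provided `T x = 0` in `ℤ/d`; this equation has
`gcd(d, T)` solutions. Finally `T = (r^n - 1)/(r^k - 1)` when `r ≥ 2`, and for `r ≤ 1` the
hypotheses force `m = 1`.
-/

open Multiplicative Subgroup SemidirectProduct

namespace ZMod

variable {n : ℕ}

section PowHom

variable {H : Type*} [Group H]

def powHom (g : H) (hg : g ^ n = 1) : Multiplicative (ZMod n) →* H :=
  AddMonoidHom.toMultiplicativeLeft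
    (ZMod.lift n ⟨zmultiplesHom (Additive H) (Additive.ofMul g), by simp [← ofMul_pow, hg]⟩)

@[simp]
lemma powHom_ofAdd_intCast (g : H) (hg : g ^ n = 1) (j : ℤ) :
    powHom g hg (ofAdd (j : ZMod n)) = g ^ j := by
  simp [powHom]

@[simp]
lemma powHom_ofAdd_natCast (g : H) (hg : g ^ n = 1) (j : ℕ) :
    powHom g hg (ofAdd (j : ZMod n)) = g ^ j := by
  simpa using powHom_ofAdd_intCast g hg j

@[simp]
lemma powHom_ofAdd_one (g : H) (hg : g ^ n = 1) : powHom g hg (ofAdd 1) = g := by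
  simpa using powHom_ofAdd_natCast g hg 1

lemma ofAdd_natCast (j : ℕ) : ofAdd (j : ZMod n) = ofAdd 1 ^ j := by
  rw [← ofAdd_nsmul, nsmul_one]

lemma ofAdd_intCast (j : ℤ) : ofAdd (j : ZMod n) = ofAdd 1 ^ j := by
  rw [← ofAdd_zsmul, zsmul_one]

lemma monoidHom_ext {f f' : Multiplicative (ZMod n) →* H} (h : f (ofAdd 1) = f' (ofAdd 1)) :
    f = f' := by
  refine MonoidHom.ext fun x => ?_
  obtain ⟨j, hj⟩ := intCast_surjective (toAdd x)
  rw [← ofAdd_toAdd x, ← hj, ofAdd_intCast, map_zpow, map_zpow, h]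

end PowHom

lemma ofAdd_natCast_pow_div {k : ℕ} (hk : k ∣ n) : ofAdd (k : ZMod n) ^ (n / k) = 1 := by
  rw [← ofAdd_nsmul, nsmul_eq_mul, ← Nat.cast_mul, Nat.div_mul_cancel hk, natCast_self, ofAdd_zero]

lemma ofAdd_mul_mem {L : Subgroup (Multiplicative (ZMod n))} (a : ZMod n) {x : ZMod n}
    (hx : ofAdd x ∈ L) : ofAdd (a * x) ∈ L := by
  obtain ⟨z, rfl⟩ := intCast_surjective a
  rw [← zsmul_eq_mul, ofAdd_zsmul]
  exact L.zpow_mem hx z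

lemma ofAdd_mem_zpowers_natCast_iff {d : ℕ} (hd : d ∣ n) (x : ZMod n) :
    ofAdd x ∈ zpowers (ofAdd (d : ZMod n)) ↔ castHom hd (ZMod d) x = 0 := by
  simp only [mem_zpowers_iff, ← ofAdd_zsmul, ofAdd.injective.eq_iff]
  constructor
  · rintro ⟨j, rfl⟩
    rw [map_zsmul, map_natCast, natCast_self, smul_zero]
  · intro hx
    obtain ⟨z, rfl⟩ := intCast_surjective x
    rw [map_intCast, intCast_zmod_eq_zero_iff_dvd] at hx
    obtain ⟨c, rfl⟩ := hx
    exact ⟨c, by push_cast; rw [zsmul_eq_mul, mul_comm]⟩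

lemma ofAdd_natCast_mem_zpowers_natCast_iff {d : ℕ} (hd : d ∣ n) (y : ℕ) :
    ofAdd (y : ZMod n) ∈ zpowers (ofAdd (d : ZMod n)) ↔ d ∣ y := by
  rw [ofAdd_mem_zpowers_natCast_iff hd, map_natCast, natCast_eq_zero_iff]

lemma eq_of_zpowers_ofAdd_natCast_eq {d d' : ℕ} (hd : d ∣ n) (hd' : d' ∣ n)
    (h : zpowers (ofAdd (d : ZMod n)) = zpowers (ofAdd (d' : ZMod n))) : d = d' :=
  Nat.dvd_antisymm ((ofAdd_natCast_mem_zpowers_natCast_iff hd d').1 (h ▸ mem_zpowers _))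
    ((ofAdd_natCast_mem_zpowers_natCast_iff hd' d).1 (h ▸ mem_zpowers _))

lemma exists_dvd_and_eq_zpowers (L : Subgroup (Multiplicative (ZMod n))) :
    ∃ d, d ∣ n ∧ L = zpowers (ofAdd (d : ZMod n)) := by
  obtain ⟨g, rfl⟩ := (L.isCyclic_iff_exists_zpowers_eq_top).1 inferInstance
  obtain ⟨z, hz⟩ := intCast_surjective (toAdd g)
  have hd : z.gcd n ∣ n := Int.natCast_dvd_natCast.1 (Int.gcd_dvd_right z n)
  refine ⟨z.gcd n, hd, le_antisymm ?_ ?_⟩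
  · rw [zpowers_le, ← ofAdd_toAdd g, ← hz, ofAdd_mem_zpowers_natCast_iff hd,
      map_intCast (castHom hd (ZMod (z.gcd n))), intCast_zmod_eq_zero_iff_dvd]
    exact Int.gcd_dvd_left z n
  · rw [zpowers_le, mem_zpowers_iff]
    refine ⟨z.gcdA n, ?_⟩
    -- Bézout: `gcd z n = z * gcdA z n + n * gcdB z n`
    rw [← ofAdd_toAdd g, ← hz, ← ofAdd_zsmul, ← Int.cast_natCast (R := ZMod n), Int.gcd_eq_gcd_ab]
    push_cast
    simp [mul_comm]

lemma castHom_natCast_val_mul {d : ℕ} [NeZero d] (hd : d ∣ n) (t : ZMod d) (T : ℕ) :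
    castHom hd (ZMod d) ((t.val : ZMod n) * T) = T • t := by
  rw [map_mul, map_natCast, map_natCast, natCast_zmod_val, nsmul_eq_mul, mul_comm]

end ZMod

instance Nat.neZero_of_mem_divisors {m : ℕ} (d : m.divisors) : NeZero (d : ℕ) :=
  ⟨(Nat.pos_of_mem_divisors d.2).ne'⟩

namespace Subgroup

variable {G Q : Type*} [Group G] [Group Q] (f : G →* Q)

lemma eq_inf_ker_sup_zpowers {H : Subgroup G} {c : G} (hc : c ∈ H)
    (hH : H.map f = zpowers (f c)) : H = (H ⊓ f.ker) ⊔ zpowers c := by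
  refine le_antisymm (fun g hg => ?_) (sup_le inf_le_left (zpowers_le.2 hc))
  obtain ⟨j, hj⟩ := mem_zpowers_iff.1 (hH ▸ mem_map_of_mem f hg)
  have hkey : g * (c ^ j)⁻¹ ∈ H ⊓ f.ker :=
    ⟨H.mul_mem hg (H.inv_mem (H.zpow_mem hc j)), by simp [← hj]⟩
  simpa using mul_mem_sup hkey (zpow_mem_zpowers c j)

lemma map_sup_zpowers {M : Subgroup G} (hM : M ≤ f.ker) (c : G) :
    (M ⊔ zpowers c).map f = zpowers (f c) := by
  rw [Subgroup.map_sup, (map_eq_bot_iff M).2 hM, bot_sup_eq, MonoidHom.map_zpowers]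

lemma sup_zpowers_inf_ker {M : Subgroup G} [M.Normal] (hM : M ≤ f.ker) {c : G}
    (hc : c ^ orderOf (f c) ∈ M) : (M ⊔ zpowers c) ⊓ f.ker = M := by
  refine le_antisymm (fun g ⟨hg, hgf⟩ => ?_) (le_inf le_sup_left hM)
  obtain ⟨x, hx, _, ⟨j, rfl⟩, rfl⟩ := mem_sup_of_normal_left.1 hg
  have hdvd : (orderOf (f c) : ℤ) ∣ j := by
    rw [orderOf_dvd_iff_zpow_eq_one, ← map_zpow]
    simpa [MonoidHom.mem_ker.1 (hM hx)] using hgf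
  obtain ⟨i, rfl⟩ := hdvd
  simpa [zpow_mul] using M.mul_mem hx (M.zpow_mem hc i)

end Subgroup

def Units.mulAutMultiplicative (R : Type*) [Ring R] : Rˣ →* MulAut (Multiplicative R) :=
  (MulAutMultiplicative R).symm.toMonoidHom.comp (DistribMulAction.toAddAut Rˣ R)

@[simp]
lemma Units.mulAutMultiplicative_apply {R : Type*} [Ring R] (u : Rˣ) (x : R) :
    Units.mulAutMultiplicative R u (ofAdd x) = ofAdd (u * x) := rfl

def normSum (r n k : ℕ) : ℕ := ∑ i ∈ Finset.range (n / k), (r ^ k) ^ i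

lemma normSum_eq_div {r n k : ℕ} (hr : 2 ≤ r) (hk : k ∣ n) (hk0 : k ≠ 0) :
    normSum r n k = (r ^ n - 1) / (r ^ k - 1) := by
  rw [normSum, Nat.geomSum_eq (hr.trans (Nat.le_self_pow hk0 r)), ← pow_mul, Nat.mul_div_cancel' hk]

section Metacyclic

variable {m n : ℕ} (ψ : Multiplicative (ZMod n) →* (ZMod m)ˣ)

abbrev MetacyclicGroup : Type :=
  Multiplicative (ZMod m) ⋊[(Units.mulAutMultiplicative (ZMod m)).comp ψ] Multiplicative (ZMod n)

namespace MetacyclicGroup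

instance normal_map_inl (L : Subgroup (Multiplicative (ZMod m))) :
    (L.map (inl : _ →* MetacyclicGroup ψ)).Normal where
  conj_mem := by
    rintro _ ⟨l, hl, rfl⟩ g
    obtain ⟨x, rfl⟩ := ofAdd.surjective l
    refine ⟨_, ZMod.ofAdd_mul_mem (ψ g.right) hl, ?_⟩
    ext <;> simp [mul_comm]

lemma map_inl_le_ker_rightHom (L : Subgroup (Multiplicative (ZMod m))) :
    L.map (inl : _ →* MetacyclicGroup ψ) ≤ rightHom.ker :=
  (map_le_range inl L).trans_eq range_inl_eq_ker_rightHom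

lemma inl_mul_inr_pow (x : ZMod m) (y : Multiplicative (ZMod n)) (j : ℕ) :
    (inl (ofAdd x) * inr y : MetacyclicGroup ψ) ^ j =
      inl (ofAdd (x * ∑ i ∈ Finset.range j, (ψ y : ZMod m) ^ i)) * inr (y ^ j) := by
  induction j with
  | zero => simp
  | succ j ih =>
    rw [pow_succ, ih]
    ext
    · simp only [mul_left, left_inl, right_inl, left_inr, right_inr, mul_right, map_one,
        mul_one, one_mul, MonoidHom.coe_comp, Function.comp_apply, map_pow ψ,
        Units.mulAutMultiplicative_apply, Units.val_pow_eq_pow_val, toAdd_mul, toAdd_ofAdd,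
        Finset.sum_range_succ]
      ring
    · simp [pow_succ]

lemma inl_mul_inr_pow_div {r k : ℕ} (hψ : (ψ (ofAdd 1) : ZMod m) = r) (hk : k ∣ n)
    (x : ZMod m) :
    (inl (ofAdd x) * inr (ofAdd (k : ZMod n)) : MetacyclicGroup ψ) ^ (n / k) =
      inl (ofAdd (x * normSum r n k)) := by
  rw [inl_mul_inr_pow, ZMod.ofAdd_natCast_pow_div hk, map_one, mul_one, ZMod.ofAdd_natCast k,
    map_pow]
  simp [normSum, hψ]

def subgroupMk (d k : ℕ) (x : ZMod m) : Subgroup (MetacyclicGroup ψ) :=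
  (zpowers (ofAdd (d : ZMod m))).map inl ⊔ zpowers (inl (ofAdd x) * inr (ofAdd (k : ZMod n)))

lemma inl_mul_inr_mem_subgroupMk (d k : ℕ) (x : ZMod m) :
    inl (ofAdd x) * inr (ofAdd (k : ZMod n)) ∈ subgroupMk ψ d k x :=
  mem_sup_right (mem_zpowers _)

lemma map_rightHom_subgroupMk (d k : ℕ) (x : ZMod m) :
    (subgroupMk ψ d k x).map rightHom = zpowers (ofAdd (k : ZMod n)) := by
  rw [subgroupMk, map_sup_zpowers _ (map_inl_le_ker_rightHom ψ _), map_mul, rightHom_inl,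
    rightHom_inr, one_mul]

lemma eq_subgroupMk {H : Subgroup (MetacyclicGroup ψ)} {d k : ℕ} {x : ZMod m}
    (hd : H.comap inl = zpowers (ofAdd (d : ZMod m)))
    (hk : H.map rightHom = zpowers (ofAdd (k : ZMod n)))
    (hx : inl (ofAdd x) * inr (ofAdd (k : ZMod n)) ∈ H) : H = subgroupMk ψ d k x :=
  calc H = (H ⊓ rightHom.ker) ⊔ zpowers (inl (ofAdd x) * inr (ofAdd (k : ZMod n))) :=
        eq_inf_ker_sup_zpowers rightHom hx (by simpa using hk)
    _ = subgroupMk ψ d k x := by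
        rw [← range_inl_eq_ker_rightHom, inf_comm, ← map_comap_eq, hd, subgroupMk]

section Invariants

variable {r : ℕ} (hψ : (ψ (ofAdd 1) : ZMod m) = r) [NeZero n] {d k : ℕ} {x : ZMod m}
  (hd : d ∣ m) (hk : k ∣ n) (hx : ZMod.castHom hd (ZMod d) (x * normSum r n k) = 0)
include hψ hk hx

lemma subgroupMk_inf_ker :
    subgroupMk ψ d k x ⊓ rightHom.ker = (zpowers (ofAdd (d : ZMod m))).map inl := by
  refine sup_zpowers_inf_ker _ (map_inl_le_ker_rightHom ψ _) ?_
  have hord : orderOf (ofAdd (k : ZMod n)) = n / k := by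
    rw [orderOf_ofAdd_eq_addOrderOf, ZMod.addOrderOf_coe _ (NeZero.ne n), Nat.gcd_eq_right hk]
  simp only [map_mul, rightHom_inl, rightHom_inr, one_mul, hord, inl_mul_inr_pow_div ψ hψ hk]
  exact mem_map_of_mem _ ((ZMod.ofAdd_mem_zpowers_natCast_iff hd _).2 hx)

lemma comap_inl_subgroupMk : (subgroupMk ψ d k x).comap inl = zpowers (ofAdd (d : ZMod m)) := by
  ext l
  rw [mem_comap, ← mem_map_iff_mem (N := MetacyclicGroup ψ) inl_injective,
    ← subgroupMk_inf_ker ψ hψ hd hk hx]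
  simp

lemma inl_mul_inr_mem_subgroupMk_iff (x' : ZMod m) :
    inl (ofAdd x') * inr (ofAdd (k : ZMod n)) ∈ subgroupMk ψ d k x ↔
      ZMod.castHom hd (ZMod d) x' = ZMod.castHom hd (ZMod d) x := by
  have hquot : inl (ofAdd x') * inr (ofAdd (k : ZMod n)) *
      (inl (ofAdd x) * inr (ofAdd (k : ZMod n)))⁻¹ =
        (inl (ofAdd (x' - x)) : MetacyclicGroup ψ) := by
    simp [mul_assoc, ofAdd_sub, div_eq_mul_inv]
  rw [← mul_mem_cancel_right (inv_mem (inl_mul_inr_mem_subgroupMk ψ d k x)), hquot, ← mem_comap,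
    comap_inl_subgroupMk ψ hψ hd hk hx, ZMod.ofAdd_mem_zpowers_natCast_iff hd, map_sub, sub_eq_zero]

end Invariants

abbrev SubgroupParams (m n r : ℕ) : Type :=
  Σ (d : m.divisors) (k : n.divisors),
    (nsmulAddMonoidHom (normSum r n k) : ZMod d →+ ZMod d).ker

def SubgroupParams.toSubgroup {r : ℕ} (p : SubgroupParams m n r) : Subgroup (MetacyclicGroup ψ) :=
  subgroupMk ψ p.1 p.2.1 ((p.2.2 : ZMod p.1).val : ZMod m)

variable {r : ℕ} (hψ : (ψ (ofAdd 1) : ZMod m) = r) [NeZero n]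
include hψ

lemma SubgroupParams.toSubgroup_injective :
    Function.Injective (SubgroupParams.toSubgroup ψ (r := r)) := by
  rintro ⟨⟨d, hd⟩, ⟨k, hk⟩, t, ht⟩ ⟨⟨d', hd'⟩, ⟨k', hk'⟩, t', ht'⟩ h
  replace h : subgroupMk ψ d k (t.val : ZMod m) = subgroupMk ψ d' k' (t'.val : ZMod m) := h
  have := Nat.neZero_of_mem_divisors ⟨d, hd⟩
  have := Nat.neZero_of_mem_divisors ⟨d', hd'⟩
  have hdm := (Nat.mem_divisors.1 hd).1
  have hkn := (Nat.mem_divisors.1 hk).1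
  have hx := (ZMod.castHom_natCast_val_mul hdm t _).trans ht
  have hx' := (ZMod.castHom_natCast_val_mul (Nat.mem_divisors.1 hd').1 t' _).trans ht'
  obtain rfl : k = k' := ZMod.eq_of_zpowers_ofAdd_natCast_eq hkn (Nat.mem_divisors.1 hk').1 <| by
    simpa only [map_rightHom_subgroupMk] using congrArg (map rightHom) h
  obtain rfl : d = d' := ZMod.eq_of_zpowers_ofAdd_natCast_eq hdm (Nat.mem_divisors.1 hd').1 <| by
    simpa only [comap_inl_subgroupMk ψ hψ hdm hkn hx, comap_inl_subgroupMk ψ hψ _ hkn hx']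
      using congrArg (comap inl) h
  obtain rfl : t' = t := by
    have hmem := (inl_mul_inr_mem_subgroupMk_iff ψ hψ hdm hkn hx _).1
      (h ▸ inl_mul_inr_mem_subgroupMk ψ d k (t'.val : ZMod m))
    simpa only [map_natCast, ZMod.natCast_zmod_val] using hmem
  rfl

lemma SubgroupParams.toSubgroup_surjective [NeZero m] :
    Function.Surjective (SubgroupParams.toSubgroup ψ (r := r)) := by
  intro H
  obtain ⟨k, hkn, hk⟩ := ZMod.exists_dvd_and_eq_zpowers (H.map rightHom)
  obtain ⟨d, hdm, hd⟩ := ZMod.exists_dvd_and_eq_zpowers (H.comap inl)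
  have : NeZero d := ⟨ne_zero_of_dvd_ne_zero (NeZero.ne m) hdm⟩
  obtain ⟨c₀, hc₀, hc₀k⟩ := mem_map.1 (hk ▸ mem_zpowers (ofAdd (k : ZMod n)))
  set t := ZMod.castHom hdm (ZMod d) (toAdd c₀.left)
  have hc : inl (ofAdd (t.val : ZMod m)) * inr (ofAdd (k : ZMod n)) ∈ H := by
    have hshift : inl (ofAdd ((t.val : ZMod m) - toAdd c₀.left)) ∈ H := by
      rw [← mem_comap, hd, ZMod.ofAdd_mem_zpowers_natCast_iff hdm, map_sub, map_natCast,
        ZMod.natCast_zmod_val, sub_self]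
    convert H.mul_mem hshift hc₀ using 1
    rw [← inl_left_mul_inr_right c₀, ← rightHom_eq_right, hc₀k]
    simp [ofAdd_sub, div_eq_mul_inv, mul_assoc]
  have ht : normSum r n k • t = 0 := by
    rw [← ZMod.castHom_natCast_val_mul hdm, ← ZMod.ofAdd_mem_zpowers_natCast_iff hdm, ← hd,
      mem_comap, ← inl_mul_inr_pow_div ψ hψ hkn]
    exact H.pow_mem hc _
  exact ⟨⟨⟨d, Nat.mem_divisors.2 ⟨hdm, NeZero.ne m⟩⟩, ⟨k, Nat.mem_divisors.2 ⟨hkn, NeZero.ne n⟩⟩,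
    t, ht⟩, (eq_subgroupMk ψ hd hk hc).symm⟩

theorem card_subgroup [NeZero m] :
    Nat.card (Subgroup (MetacyclicGroup ψ)) =
      ∑ d ∈ m.divisors, ∑ k ∈ n.divisors, d.gcd (normSum r n k) := by
  rw [← Nat.card_eq_of_bijective _ ⟨SubgroupParams.toSubgroup_injective ψ hψ,
    SubgroupParams.toSubgroup_surjective ψ hψ⟩, Nat.card_sigma, ← Finset.sum_coe_sort m.divisors]
  refine Finset.sum_congr rfl fun d _ => ?_
  rw [Nat.card_sigma, ← Finset.sum_coe_sort n.divisors]
  refine Finset.sum_congr rfl fun k _ => ?_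
  rw [IsAddCyclic.card_nsmulAddMonoidHom_ker, Nat.card_zmod]

end MetacyclicGroup

end Metacyclic

namespace ZM

variable {m n r : ℕ}

lemma za_pow_eq_one : za m n r ^ m = 1 := by
  have := PresentedGroup.one_of_mem (rels := ZMrel m n r) (x := FreeGroup.of 0 ^ m)
    (by simp [ZMrel])
  rwa [map_pow] at this

lemma zb_pow_eq_one : zb m n r ^ n = 1 := by
  have := PresentedGroup.one_of_mem (rels := ZMrel m n r) (x := FreeGroup.of 1 ^ n)
    (by simp [ZMrel])
  rwa [map_pow] at this

lemma zb_inv_mul_za_mul_zb : (zb m n r)⁻¹ * za m n r * zb m n r = za m n r ^ r := by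
  have := PresentedGroup.one_of_mem (rels := ZMrel m n r)
    (x := (FreeGroup.of 1)⁻¹ * FreeGroup.of 0 * FreeGroup.of 1 * (FreeGroup.of 0 ^ r)⁻¹)
    (by simp [ZMrel])
  simp only [map_mul, map_inv, map_pow, mul_inv_eq_one] at this
  exact this

lemma conj_zb_inv_pow_za (j : ℕ) :
    MulAut.conj ((zb m n r)⁻¹ ^ j) (za m n r) = za m n r ^ r ^ j := by
  induction j with
  | zero => simp
  | succ j ih =>
    rw [pow_succ', map_mul, MulAut.mul_apply, ih, map_pow, MulAut.conj_apply, inv_inv,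
      zb_inv_mul_za_mul_zb, ← pow_mul, pow_succ']

variable [NeZero n] (hr : (r : ZMod m) ^ n = 1)

def action : Multiplicative (ZMod n) →* (ZMod m)ˣ :=
  ZMod.powHom (Units.ofPowEqOne _ n hr (NeZero.ne n)) (Units.pow_ofPowEqOne _ _)

lemma action_ofAdd_one : (action hr (ofAdd 1) : ZMod m) = r := by
  simp [action]

lemma action_ofAdd_natCast (j : ℕ) :
    (action hr (ofAdd (j : ZMod n)) : ZMod m) = ((r ^ j : ℕ) : ZMod m) := by
  simp [action]

-- `b⁻¹` acts on `a` as multiplication by `r`, so `b` goes to minus the generator of `ℤ/n`.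
def toMetacyclic : ZM m n r →* MetacyclicGroup (action hr) :=
  PresentedGroup.toGroup (f := ![inl (ofAdd 1), inr (ofAdd (-1))]) <| by
    intro w hw
    simp only [ZMrel, Set.mem_insert_iff, Set.mem_singleton_iff] at hw
    rcases hw with rfl | rfl | rfl <;>
      simp only [map_mul, map_inv, map_pow, FreeGroup.lift_apply_of, Matrix.cons_val_zero,
        Matrix.cons_val_one, Matrix.cons_val_fin_one, ofAdd_neg, inv_inv, inv_pow, inv_eq_one]
    · rw [← map_pow, ← ZMod.ofAdd_natCast, ZMod.natCast_self, ofAdd_zero, map_one]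
    · rw [← map_pow, ← ZMod.ofAdd_natCast, ZMod.natCast_self, ofAdd_zero, map_one]
    · rw [← map_inv inr, ← inl_aut, ← map_pow, ← ZMod.ofAdd_natCast, mul_inv_eq_one, inl_inj]
      simp [action_ofAdd_one]

def ofMetacyclic : MetacyclicGroup (action hr) →* ZM m n r :=
  SemidirectProduct.lift (ZMod.powHom (za m n r) za_pow_eq_one)
    (ZMod.powHom (zb m n r)⁻¹ (by rw [inv_pow, zb_pow_eq_one, inv_one])) fun g => by
      obtain ⟨j, rfl⟩ : ∃ j : ℕ, g = ofAdd (j : ZMod n) := ⟨(toAdd g).val, by simp⟩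
      refine ZMod.monoidHom_ext ?_
      simp only [MonoidHom.comp_apply, MulEquiv.coe_toMonoidHom, Units.mulAutMultiplicative_apply,
        action_ofAdd_natCast, mul_one, ZMod.powHom_ofAdd_natCast, ZMod.powHom_ofAdd_one,
        conj_zb_inv_pow_za]

def mulEquivMetacyclic : ZM m n r ≃* MetacyclicGroup (action hr) :=
  (toMetacyclic hr).toMulEquiv (ofMetacyclic hr)
    (PresentedGroup.ext fun i => by
      fin_cases i
      · simp [toMetacyclic, ofMetacyclic, za]
      · simp [toMetacyclic, ofMetacyclic, zb])
    (SemidirectProduct.hom_ext (ZMod.monoidHom_ext (by simp [toMetacyclic, ofMetacyclic, za]))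
      (ZMod.monoidHom_ext (by simp [toMetacyclic, ofMetacyclic, zb])))

end ZM

lemma Nat.eq_one_or_two_le_of_pow_modEq_one {m n r : ℕ} (hn : 0 < n)
    (hgcd : m.gcd (r - 1) = 1) (hpow : r ^ n ≡ 1 [MOD m]) : m = 1 ∨ 2 ≤ r := by
  rcases r with _ | _ | r
  · rw [zero_pow hn.ne'] at hpow
    exact Or.inl (Nat.dvd_one.1 ((Nat.modEq_iff_dvd' (Nat.zero_le 1)).1 hpow))
  · simpa using hgcd
  · omega

theorem card_subgroups_ZM_general (m n r : ℕ)
    (hm : 0 < m) (hn : 0 < n)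
    (h2 : Nat.gcd m (r - 1) = 1) (h3 : r ^ n ≡ 1 [MOD m]) :
    Nat.card (Subgroup (ZM m n r)) =
      ∑ m₁ ∈ m.divisors, ∑ n₁ ∈ n.divisors,
        Nat.gcd m₁ ((r ^ n - 1) / (r ^ n₁ - 1)) := by
  have : NeZero m := ⟨hm.ne'⟩
  have : NeZero n := ⟨hn.ne'⟩
  have hr : (r : ZMod m) ^ n = 1 := by
    exact_mod_cast (ZMod.natCast_eq_natCast_iff _ _ _).2 h3
  rw [Nat.card_congr (ZM.mulEquivMetacyclic hr).mapSubgroup.toEquiv,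
    MetacyclicGroup.card_subgroup _ (ZM.action_ofAdd_one hr)]
  rcases Nat.eq_one_or_two_le_of_pow_modEq_one hn h2 h3 with rfl | hr2
  · simp
  · refine Finset.sum_congr rfl fun d _ => Finset.sum_congr rfl fun k hk => ?_
    rw [normSum_eq_div hr2 (Nat.dvd_of_mem_divisors hk) (Nat.pos_of_mem_divisors hk).ne']

/-- The total number of subgroups of `ZM(m,n,r)` equals
`∑_{m₁ ∣ m} ∑_{n₁ ∣ n} gcd(m₁, (r^n−1)/(r^{n₁}−1))`. -/
theorem card_subgroups_ZM (m n r : ℕ)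
    (hm : 0 < m) (hn : 0 < n) (hr : 0 < r)
    (h1 : Nat.gcd m n = 1) (h2 : Nat.gcd m (r - 1) = 1) (h3 : r ^ n ≡ 1 [MOD m]) :
    Nat.card (Subgroup (ZM m n r)) =
      ∑ m₁ ∈ m.divisors, ∑ n₁ ∈ n.divisors,
        Nat.gcd m₁ ((r ^ n - 1) / (r ^ n₁ - 1)) :=
  card_subgroups_ZM_general m n r hm hn h2 h3
end

section
/- The cyclic factorization number of ZM(9,4,8), counting ordered pairs of cyclic subgroups (H,K) with HK = G, equals 36. -/
open Pointwise

/-!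
`ZM(9,4,8)` is the dicyclic group `QuaternionGroup 9` of order 36: `c = ab²` has order 18,
`b² = c⁹`, and `b` inverts `c`, while conversely `a = c¹⁰`. The number of cyclic factorizations
is an isomorphism invariant, and in a finite group `G` the cyclic subgroups are exactly the sets
`{gᵏ : k < |G|}`, so for `QuaternionGroup 9` the count is a finite enumeration, which the kernel
carries out.
-/

open Finset

section ZMRelations

variable {m n r : ℕ}

lemma za_pow : za m n r ^ m = 1 :=
  (map_pow _ _ _).symm.trans (PresentedGroup.one_of_mem (Or.inl rfl))

lemma zb_pow : zb m n r ^ n = 1 :=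
  (map_pow _ _ _).symm.trans (PresentedGroup.one_of_mem (Or.inr (Or.inl rfl)))

lemma zb_inv_mul_za_mul_zb : (zb m n r)⁻¹ * za m n r * zb m n r = za m n r ^ r := by
  have h := PresentedGroup.mk_eq_mk_of_mul_inv_mem (rels := ZMrel m n r) (Or.inr (Or.inr rfl))
  simp only [map_mul, map_inv, map_pow] at h
  exact h

end ZMRelations

section PowVal

variable {G : Type*} [Group G] {m : ℕ} {c : G}

lemma pow_val_natCast (hc : c ^ m = 1) (k : ℕ) : c ^ (k : ZMod m).val = c ^ k := by
  rw [ZMod.val_natCast, ← pow_eq_pow_mod _ hc]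

lemma pow_val_add [NeZero m] (hc : c ^ m = 1) (i j : ZMod m) :
    c ^ (i + j).val = c ^ i.val * c ^ j.val := by
  rw [ZMod.val_add, ← pow_eq_pow_mod _ hc, pow_add]

lemma pow_val_sub [NeZero m] (hc : c ^ m = 1) (i j : ZMod m) :
    c ^ (j - i).val = (c ^ i.val)⁻¹ * c ^ j.val := by
  rw [eq_inv_mul_iff_mul_eq, ← pow_val_add hc, add_sub_cancel]

end PowVal

section Inverting

variable {G : Type*} [Group G] {a b : G}

lemma pow_mul_eq_mul_inv_pow (h : b⁻¹ * a * b = a⁻¹) (k : ℕ) : a ^ k * b = b * (a ^ k)⁻¹ := by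
  have := conj_pow (a := b⁻¹) (b := a) (i := k)
  rw [inv_inv, h, inv_pow] at this
  rw [this]
  group

lemma commute_sq_of_inv_mul_mul_eq_inv (h : b⁻¹ * a * b = a⁻¹) : Commute a (b ^ 2) := by
  have h' : b * a * b⁻¹ = a⁻¹ := by
    calc b * a * b⁻¹ = (b * (b⁻¹ * a * b) * b⁻¹)⁻¹ := by rw [h]; group
      _ = a⁻¹ := by group
  calc a * b ^ 2 = b * (b⁻¹ * a * b) * b := by rw [sq]; group
    _ = b * (b * a * b⁻¹) * b := by rw [h, h']
    _ = b ^ 2 * a := by rw [sq]; group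

lemma inv_mul_mul_sq_mul_eq_inv (h : b⁻¹ * a * b = a⁻¹) (hb : b ^ 4 = 1) :
    b⁻¹ * (a * b ^ 2) * b = (a * b ^ 2)⁻¹ := by
  rw [eq_inv_iff_mul_eq_one]
  calc b⁻¹ * (a * b ^ 2) * b * (a * b ^ 2) = (b⁻¹ * a * b) * (b ^ 2 * a) * b ^ 2 := by group
    _ = b ^ 4 := by rw [h, ← (commute_sq_of_inv_mul_mul_eq_inv h).eq]; group
    _ = 1 := hb

end Inverting

namespace QuaternionGroup

variable {n : ℕ} [NeZero n] {G : Type*} [Group G] {b c : G}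

def lift (hc : c ^ (2 * n) = 1) (hb : b ^ 2 = c ^ n) (hbc : b⁻¹ * c * b = c⁻¹) :
    QuaternionGroup n →* G where
  toFun
    | a i => c ^ i.val
    | xa i => b * c ^ i.val
  map_one' := by
    show c ^ (0 : ZMod (2 * n)).val = 1
    rw [ZMod.val_zero, pow_zero]
  map_mul' := by
    rintro (i | i) (j | j)
    · simp only [a_mul_a, pow_val_add hc]
    · simp only [a_mul_xa, pow_val_sub hc, ← mul_assoc, pow_mul_eq_mul_inv_pow hbc]
    · simp only [xa_mul_a, pow_val_add hc, mul_assoc]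
    · simp only [xa_mul_xa]
      rw [add_sub_assoc, pow_val_add hc, pow_val_sub hc, pow_val_natCast hc, ← hb, mul_assoc b,
        ← mul_assoc (c ^ i.val), pow_mul_eq_mul_inv_pow hbc, sq]
      simp only [mul_assoc]

@[simp]
lemma lift_a (hc : c ^ (2 * n) = 1) (hb : b ^ 2 = c ^ n) (hbc : b⁻¹ * c * b = c⁻¹)
    (i : ZMod (2 * n)) : lift hc hb hbc (a i) = c ^ i.val := rfl

@[simp]
lemma lift_xa (hc : c ^ (2 * n) = 1) (hb : b ^ 2 = c ^ n) (hbc : b⁻¹ * c * b = c⁻¹)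
    (i : ZMod (2 * n)) : lift hc hb hbc (xa i) = b * c ^ i.val := rfl

end QuaternionGroup

section CyclicFactorizations

variable {G H : Type*} [Group G] [Group H]

variable (G) in
def cyclicFactorizations : Set (Subgroup G × Subgroup G) :=
  {p | IsCyclic p.1 ∧ IsCyclic p.2 ∧ (p.1 : Set G) * (p.2 : Set G) = Set.univ}

lemma mul_map_eq_univ_iff (e : G ≃* H) (K L : Subgroup G) :
    ((K.map (e : G →* H) : Set H) * (L.map (e : G →* H) : Set H) = Set.univ) ↔
      (K : Set G) * (L : Set G) = Set.univ := by
  rw [Subgroup.coe_map, Subgroup.coe_map, ← Set.image_mul,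
    ← Set.image_univ_of_surjective e.surjective]
  exact (Set.image_injective.mpr e.injective).eq_iff

lemma card_cyclicFactorizations_congr (e : G ≃* H) :
    Nat.card (cyclicFactorizations G) = Nat.card (cyclicFactorizations H) :=
  Nat.card_congr <| (e.mapSubgroup.toEquiv.prodCongr e.mapSubgroup.toEquiv).subtypeEquiv
    fun ⟨K, L⟩ => by
      change _ ↔ IsCyclic (K.map (e : G →* H)) ∧ IsCyclic (L.map (e : G →* H)) ∧
        (K.map (e : G →* H) : Set H) * (L.map (e : G →* H) : Set H) = Set.univ
      rw [← (e.subgroupMap K).isCyclic, ← (e.subgroupMap L).isCyclic, mul_map_eq_univ_iff]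
      rfl

lemma coe_mul_coe_eq_univ_iff (s t : Finset G) :
    (s : Set G) * (t : Set G) = Set.univ ↔ ∀ x : G, ∃ a ∈ s, ∃ b ∈ t, a * b = x := by
  simp only [Set.eq_univ_iff_forall, Set.mem_mul, mem_coe]

end CyclicFactorizations

section Finite

variable {G : Type*} [Group G] [Fintype G] [DecidableEq G]

def zpowersFinset (g : G) : Finset G := (range (Fintype.card G)).image (g ^ ·)

lemma coe_zpowersFinset (g : G) : (zpowersFinset g : Set G) = Subgroup.zpowers g := by
  ext x
  simp only [zpowersFinset, coe_image, coe_range, Set.mem_image, Set.mem_Iio, SetLike.mem_coe,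
    mem_zpowers_iff_mem_range_orderOf, Finset.mem_image, Finset.mem_range]
  constructor
  · rintro ⟨k, -, rfl⟩
    exact ⟨k % orderOf g, Nat.mod_lt _ (orderOf_pos g), pow_mod_orderOf g k⟩
  · rintro ⟨k, hk, rfl⟩
    exact ⟨k, hk.trans_le orderOf_le_card_univ, rfl⟩

variable (G) in
def cyclicFactorizationFinset : Finset (Finset G × Finset G) :=
  (univ.image zpowersFinset ×ˢ univ.image zpowersFinset).filter
    fun p => ∀ x : G, ∃ a ∈ p.1, ∃ b ∈ p.2, a * b = x

lemma mem_cyclicFactorizationFinset (g k : G) :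
    (zpowersFinset g, zpowersFinset k) ∈ cyclicFactorizationFinset G ↔
      (Subgroup.zpowers g : Set G) * (Subgroup.zpowers k : Set G) = Set.univ := by
  rw [← coe_zpowersFinset, ← coe_zpowersFinset, coe_mul_coe_eq_univ_iff]
  simp only [cyclicFactorizationFinset, mem_filter, mem_product, mem_image, mem_univ, true_and]
  exact and_iff_right ⟨⟨g, rfl⟩, ⟨k, rfl⟩⟩

lemma image_coe_cyclicFactorizations :
    Prod.map ((↑) : Subgroup G → Set G) ((↑) : Subgroup G → Set G) '' cyclicFactorizations G =
      Prod.map ((↑) : Finset G → Set G) ((↑) : Finset G → Set G) ''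
        ↑(cyclicFactorizationFinset G) := by
  ext ⟨s, t⟩
  constructor
  · rintro ⟨⟨K, L⟩, ⟨hK, hL, hKL⟩, hst⟩
    obtain ⟨g, rfl⟩ := (K.isCyclic_iff_exists_zpowers_eq_top).mp hK
    obtain ⟨k, rfl⟩ := (L.isCyclic_iff_exists_zpowers_eq_top).mp hL
    refine ⟨(zpowersFinset g, zpowersFinset k), (mem_cyclicFactorizationFinset g k).mpr hKL, ?_⟩
    rw [← hst, Prod.map, Prod.map, coe_zpowersFinset, coe_zpowersFinset]
  · rintro ⟨⟨u, v⟩, huv, hst⟩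
    obtain ⟨⟨⟨g, -, rfl⟩, ⟨k, -, rfl⟩⟩, -⟩ := by
      simpa only [cyclicFactorizationFinset, coe_filter, mem_product, mem_image] using huv
    refine ⟨(Subgroup.zpowers g, Subgroup.zpowers k),
      ⟨inferInstance, inferInstance, (mem_cyclicFactorizationFinset g k).mp huv⟩, ?_⟩
    rw [← hst, Prod.map, Prod.map, coe_zpowersFinset, coe_zpowersFinset]

theorem card_cyclicFactorizations_eq_card_cyclicFactorizationFinset :
    Nat.card (cyclicFactorizations G) = #(cyclicFactorizationFinset G) := by
  rw [← Nat.card_image_of_injective (SetLike.coe_injective.prodMap SetLike.coe_injective),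
    image_coe_cyclicFactorizations,
    Nat.card_image_of_injective (coe_injective.prodMap coe_injective), Nat.card_coe_set_eq,
    Set.ncard_coe_finset]

end Finite

namespace ZM948

open QuaternionGroup

local notation "A" => za 9 4 8
local notation "B" => zb 9 4 8

lemma zb_inv_mul_za_mul_zb_eq_inv : B⁻¹ * A * B = A⁻¹ := by
  rw [zb_inv_mul_za_mul_zb, eq_inv_iff_mul_eq_one, ← pow_succ, za_pow]

lemma za_mul_zb_sq_pow (k : ℕ) : (A * B ^ 2) ^ k = A ^ (k % 9) * B ^ (2 * k % 4) := by
  rw [(commute_sq_of_inv_mul_mul_eq_inv zb_inv_mul_za_mul_zb_eq_inv).mul_pow, ← pow_mul,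
    ← pow_eq_pow_mod _ za_pow, ← pow_eq_pow_mod _ zb_pow]

def toQuaternionGroup : ZM 9 4 8 →* QuaternionGroup 9 :=
  PresentedGroup.toGroup (f := ![a 10, xa 0]) (by
    rintro r (rfl | rfl | rfl) <;>
      simp only [map_pow, map_mul, map_inv, FreeGroup.lift_apply_of] <;> decide)

def ofQuaternionGroup : QuaternionGroup 9 →* ZM 9 4 8 :=
  lift (c := A * B ^ 2) (b := B) (by rw [za_mul_zb_sq_pow]; rfl)
    (by rw [za_mul_zb_sq_pow]; rfl)
    (inv_mul_mul_sq_mul_eq_inv zb_inv_mul_za_mul_zb_eq_inv zb_pow)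

lemma toQuaternionGroup_za : toQuaternionGroup A = a 10 := PresentedGroup.toGroup.of _

lemma toQuaternionGroup_zb : toQuaternionGroup B = xa 0 := PresentedGroup.toGroup.of _

lemma toQuaternionGroup_za_mul_zb_sq : toQuaternionGroup (A * B ^ 2) = a 1 := by
  rw [map_mul, map_pow, toQuaternionGroup_za, toQuaternionGroup_zb]
  decide

lemma toQuaternionGroup_ofQuaternionGroup (q : QuaternionGroup 9) :
    toQuaternionGroup (ofQuaternionGroup q) = q := by
  rcases q with i | i
  · rw [ofQuaternionGroup, lift_a, map_pow, toQuaternionGroup_za_mul_zb_sq, a_one_pow,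
      ZMod.natCast_zmod_val]
  · rw [ofQuaternionGroup, lift_xa, map_mul, map_pow, toQuaternionGroup_za_mul_zb_sq,
      toQuaternionGroup_zb, a_one_pow, ZMod.natCast_zmod_val, xa_mul_a, zero_add]

lemma ofQuaternionGroup_toQuaternionGroup (x : ZM 9 4 8) :
    ofQuaternionGroup (toQuaternionGroup x) = x := by
  suffices ofQuaternionGroup.comp toQuaternionGroup = MonoidHom.id _ from DFunLike.congr_fun this x
  refine PresentedGroup.ext fun i => ?_
  fin_cases i
  · show ofQuaternionGroup (toQuaternionGroup A) = A
    rw [toQuaternionGroup_za]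
    show (A * B ^ 2) ^ 10 = A
    rw [za_mul_zb_sq_pow, pow_one, pow_zero, mul_one]
  · show ofQuaternionGroup (toQuaternionGroup B) = B
    rw [toQuaternionGroup_zb]
    show B * (A * B ^ 2) ^ 0 = B
    rw [pow_zero, mul_one]

def equivQuaternionGroup : ZM 9 4 8 ≃* QuaternionGroup 9 where
  __ := toQuaternionGroup
  invFun := ofQuaternionGroup
  left_inv := ofQuaternionGroup_toQuaternionGroup
  right_inv := toQuaternionGroup_ofQuaternionGroup

end ZM948

lemma card_cyclicFactorizationFinset_quaternionGroup_nine :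
    #(cyclicFactorizationFinset (QuaternionGroup 9)) = 36 := by
  decide +kernel

/-- The cyclic factorization number of `ZM(9,4,8)` equals `36`. -/
theorem CF2_ZM948 :
    Nat.card {p : Subgroup (ZM 9 4 8) × Subgroup (ZM 9 4 8) //
        IsCyclic p.1 ∧ IsCyclic p.2 ∧
          (p.1 : Set (ZM 9 4 8)) * (p.2 : Set (ZM 9 4 8)) = Set.univ} = 36 := by
  change Nat.card (cyclicFactorizations (ZM 9 4 8)) = 36
  rw [card_cyclicFactorizations_congr ZM948.equivQuaternionGroup,
    card_cyclicFactorizations_eq_card_cyclicFactorizationFinset,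
    card_cyclicFactorizationFinset_quaternionGroup_nine]
end

section
/- For a finite group G, sd(G) = (1/|L(G)|²) · Σ_{H ∈ L(G)} F₂(H), where F₂(H) is the number of ordered pairs (A,B) of subgroups of H with AB = H. -/
open Pointwise

/-- The factorization number `F₂(G)` of a group `G`: the number of ordered pairs
of subgroups `(A,B)` with `AB = G`. -/
noncomputable def F2 (G : Type*) [Group G] : ℕ :=
  Nat.card {p : Subgroup G × Subgroup G // (p.1 : Set G) * (p.2 : Set G) = Set.univ}

section Aux

variable {G : Type*} [Group G]

theorem coe_mul_self' (A : Subgroup G) : (A : Set G) * (A : Set G) = A :=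
  Submonoid.coe_mul_self_eq A.toSubmonoid

/-- If `A` and `B` commute setwise, `A*B` is a subgroup. -/
def mulSubgroup (A B : Subgroup G) (h : (A : Set G) * B = (B : Set G) * A) : Subgroup G where
  carrier := (A : Set G) * B
  one_mem' := ⟨1, A.one_mem, 1, B.one_mem, one_mul 1⟩
  mul_mem' := by
    intro x y hx hy
    have key : ((A : Set G) * B) * ((A : Set G) * B) = (A : Set G) * B := by
      calc ((A : Set G) * B) * ((A : Set G) * B)
          = (A : Set G) * ((B : Set G) * A) * B := by rw [mul_assoc, mul_assoc, mul_assoc]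
        _ = (A : Set G) * ((A : Set G) * B) * B := by rw [h]
        _ = ((A : Set G) * A) * ((B : Set G) * B) := by rw [mul_assoc, mul_assoc, mul_assoc]
        _ = (A : Set G) * B := by rw [coe_mul_self', coe_mul_self']
    rw [← key]
    exact Set.mul_mem_mul hx hy
  inv_mem' := by
    intro x hx
    have : x⁻¹ ∈ ((A : Set G) * B)⁻¹ := Set.inv_mem_inv.mpr hx
    rwa [mul_inv_rev, inv_coe_set, inv_coe_set, ← h] at this

theorem coe_mulSubgroup (A B : Subgroup G) (h : (A : Set G) * B = (B : Set G) * A) :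
    (mulSubgroup A B h : Set G) = (A : Set G) * B := rfl

theorem left_le_mulSubgroup (A B : Subgroup G) (h : (A : Set G) * B = (B : Set G) * A) :
    A ≤ mulSubgroup A B h := fun a ha => ⟨a, ha, 1, B.one_mem, mul_one a⟩

theorem right_le_mulSubgroup (A B : Subgroup G) (h : (A : Set G) * B = (B : Set G) * A) :
    B ≤ mulSubgroup A B h := fun b hb => ⟨1, A.one_mem, b, hb, one_mul b⟩

/-- product of images under subtype -/
theorem map_prod_eq (H : Subgroup G) (A' B' : Subgroup H)
    (h : (A' : Set H) * (B' : Set H) = Set.univ) :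
    ((A'.map H.subtype : Subgroup G) : Set G) * (B'.map H.subtype : Subgroup G) = (H : Set G) := by
  rw [Subgroup.coe_map, Subgroup.coe_map, ← Set.image_mul, h, Set.image_univ,
    Subgroup.coe_subtype, Subtype.range_coe]

theorem comm_of_eq_subgroup (A B H : Subgroup G) (h : (A : Set G) * B = (H : Set G)) :
    (A : Set G) * B = (B : Set G) * A := by
  have : ((A : Set G) * B)⁻¹ = (B : Set G) * A := by
    rw [mul_inv_rev, inv_coe_set, inv_coe_set]
  rw [← this, h, inv_coe_set, ← h]

/-- The pairs of setwise-commuting subgroups of `G` are in bijection with the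
disjoint union, over all subgroups `H` of `G`, of the factorizations of `H`. -/
noncomputable def theEquiv :
    (Σ H : Subgroup G, {p : Subgroup H × Subgroup H //
        (p.1 : Set H) * (p.2 : Set H) = Set.univ}) ≃
    {p : Subgroup G × Subgroup G //
        (p.1 : Set G) * (p.2 : Set G) = (p.2 : Set G) * (p.1 : Set G)} :=
  Equiv.ofBijective
    (fun x => ⟨(x.2.1.1.map x.1.subtype, x.2.1.2.map x.1.subtype),
      comm_of_eq_subgroup _ _ x.1 (map_prod_eq x.1 _ _ x.2.2)⟩)
    (by
      constructor
      · rintro ⟨H₁, ⟨A₁, B₁⟩, h₁⟩ ⟨H₂, ⟨A₂, B₂⟩, h₂⟩ he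
        simp only [Subtype.mk_eq_mk, Prod.mk.injEq] at he
        have hH : H₁ = H₂ := by
          apply SetLike.coe_injective
          rw [← map_prod_eq H₁ A₁ B₁ h₁, ← map_prod_eq H₂ A₂ B₂ h₂, he.1, he.2]
        subst hH
        have hA : A₁ = A₂ := Subgroup.map_injective H₁.subtype_injective he.1
        have hB : B₁ = B₂ := Subgroup.map_injective H₁.subtype_injective he.2
        subst hA; subst hB; rfl
      · rintro ⟨⟨A, B⟩, hc⟩
        set H := mulSubgroup A B hc with hH
        have hA : A ≤ H := left_le_mulSubgroup A B hc
        have hB : B ≤ H := right_le_mulSubgroup A B hc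
        have hprod : ((A.subgroupOf H : Subgroup H) : Set H) *
            ((B.subgroupOf H : Subgroup H) : Set H) = Set.univ := by
          apply Set.image_injective.mpr H.subtype_injective
          rw [Set.image_mul, ← Subgroup.coe_map, ← Subgroup.coe_map,
            Subgroup.subgroupOf_map_subtype, Subgroup.subgroupOf_map_subtype,
            inf_eq_left.mpr hA, inf_eq_left.mpr hB, Set.image_univ,
            Subgroup.coe_subtype, Subtype.range_coe]
          rfl
        refine ⟨⟨H, ⟨(A.subgroupOf H, B.subgroupOf H), hprod⟩⟩, ?_⟩
        simp only [Subtype.mk_eq_mk, Prod.mk.injEq]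
        constructor
        · rw [Subgroup.subgroupOf_map_subtype, inf_eq_left.mpr hA]
        · rw [Subgroup.subgroupOf_map_subtype, inf_eq_left.mpr hB])

end Aux

/-- For a finite group `G`,
`sd(G) = (1/|L(G)|²) · Σ_{H ∈ L(G)} F₂(H)`. -/
theorem sd_eq_sum_F2 (G : Type*) [Group G] [Fintype G] [DecidableEq G] :
    (Nat.card {p : Subgroup G × Subgroup G //
        (p.1 : Set G) * (p.2 : Set G) = (p.2 : Set G) * (p.1 : Set G)} : ℚ) /
      (Nat.card (Subgroup G) : ℚ) ^ 2 =
    (1 / (Nat.card (Subgroup G) : ℚ) ^ 2) * ∑ H : Subgroup G, (F2 H : ℚ) := by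
  classical
  have key : Nat.card {p : Subgroup G × Subgroup G //
      (p.1 : Set G) * (p.2 : Set G) = (p.2 : Set G) * (p.1 : Set G)} =
      ∑ H : Subgroup G, F2 H := by
    rw [← Nat.card_congr (theEquiv (G := G))]
    haveI : ∀ H : Subgroup G, Fintype {p : Subgroup H × Subgroup H //
        (p.1 : Set H) * (p.2 : Set H) = Set.univ} := fun H => Fintype.ofFinite _
    rw [Nat.card_eq_fintype_card, Fintype.card_sigma]
    refine Finset.sum_congr rfl fun H _ => ?_
    rw [F2, Nat.card_eq_fintype_card]
  rw [key, Nat.cast_sum, one_div, inv_mul_eq_div]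
end

section
/- The arithmetic function g(n) = n · Σ_{r|n, s|n} 1/gcd(r,s) is multiplicative, and for a prime p and α ≥ 1, g(p^α) = ((2α+1)p^{α+2} − (2α+3)p^{α+1} + p + 1) / (p−1)². -/
/-!
For coprime `m, n` every divisor of `mn` factors uniquely as a divisor of `m` times a divisor
of `n`, and the gcd of two such products splits accordingly, so the double sum over pairs of
divisors factors. At `p^α` the summand is `p^{-min(i,j)}`; enlarging the index square from
`α` to `α + 1` adds two copies of a geometric sum plus the corner term, and the closed form
follows by induction.
-/

/-- The arithmetic function `g(n) = n · Σ_{r,s ∣ n} 1/gcd(r,s)`. -/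
noncomputable def gfun (n : ℕ) : ℚ :=
  (n : ℚ) * ∑ r ∈ n.divisors, ∑ s ∈ n.divisors, 1 / (Nat.gcd r s : ℚ)

open Finset

namespace Nat

theorem gcd_pow_pow (p i j : ℕ) : gcd (p ^ i) (p ^ j) = p ^ min i j := by
  rcases le_total i j with h | h
  · rw [gcd_eq_left (pow_dvd_pow _ h), min_eq_left h]
  · rw [gcd_eq_right (pow_dvd_pow _ h), min_eq_right h]

namespace Coprime

variable {m n : ℕ}

theorem gcd_mul_mul_of_dvd (hmn : m.Coprime n) {r₁ s₁ r₂ s₂ : ℕ}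
    (hr₁ : r₁ ∣ m) (hs₁ : s₁ ∣ m) (hr₂ : r₂ ∣ n) (hs₂ : s₂ ∣ n) :
    gcd (r₁ * r₂) (s₁ * s₂) = gcd r₁ s₁ * gcd r₂ s₂ := by
  have hs : s₁.Coprime s₂ := (hmn.coprime_dvd_left hs₁).coprime_dvd_right hs₂
  have hr₂s₁ : r₂.Coprime s₁ := (hmn.symm.coprime_dvd_left hr₂).coprime_dvd_right hs₁
  have hr₁s₂ : r₁.Coprime s₂ := (hmn.coprime_dvd_left hr₁).coprime_dvd_right hs₂
  rw [hs.gcd_mul, hr₂s₁.gcd_mul_right_cancel, hr₁s₂.gcd_mul_left_cancel]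

theorem sum_divisors_mul_eq_sum_product {M : Type*} [AddCommMonoid M] (hmn : m.Coprime n)
    (f : ℕ → M) :
    ∑ d ∈ (m * n).divisors, f d = ∑ x ∈ m.divisors ×ˢ n.divisors, f (x.1 * x.2) := by
  rw [hmn.divisors_mul, sum_map]
  exact sum_attach _ fun x : ℕ × ℕ => f (x.1 * x.2)

theorem sum_divisors_sum_divisors_mul {R : Type*} [CommSemiring R] (hmn : m.Coprime n)
    (F : ℕ → ℕ → R)
    (hF : ∀ r₁ ∈ m.divisors, ∀ s₁ ∈ m.divisors, ∀ r₂ ∈ n.divisors, ∀ s₂ ∈ n.divisors,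
      F (r₁ * r₂) (s₁ * s₂) = F r₁ s₁ * F r₂ s₂) :
    ∑ r ∈ (m * n).divisors, ∑ s ∈ (m * n).divisors, F r s =
      (∑ r ∈ m.divisors, ∑ s ∈ m.divisors, F r s) * ∑ r ∈ n.divisors, ∑ s ∈ n.divisors, F r s := by
  simp only [hmn.sum_divisors_mul_eq_sum_product, sum_product, sum_mul_sum]
  refine sum_congr rfl fun r₁ hr₁ => sum_congr rfl fun r₂ hr₂ => ?_
  exact sum_congr rfl fun s₁ hs₁ => sum_congr rfl fun s₂ hs₂ => hF r₁ hr₁ s₁ hs₁ r₂ hr₂ s₂ hs₂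

end Coprime

end Nat

theorem sum_range_succ_sum_range_succ_min {M : Type*} [AddCommMonoid M] (f : ℕ → M) (n : ℕ) :
    ∑ i ∈ range (n + 1), ∑ j ∈ range (n + 1), f (min i j) =
      ∑ i ∈ range n, ∑ j ∈ range n, f (min i j) + 2 • ∑ i ∈ range n, f i + f n := by
  have hlt : ∀ i ∈ range n, min i n = i ∧ min n i = i := fun i hi =>
    ⟨min_eq_left (mem_range.mp hi).le, min_eq_right (mem_range.mp hi).le⟩
  simp only [sum_range_succ, sum_add_distrib, min_self, two_smul]
  rw [sum_congr rfl fun i hi => congrArg f (hlt i hi).1,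
    sum_congr rfl fun i hi => congrArg f (hlt i hi).2]
  abel

theorem pow_mul_sum_range_sum_range_inv_pow_min {K : Type*} [Field K] {x : K} (hx0 : x ≠ 0)
    (hx1 : x ≠ 1) (n : ℕ) :
    x ^ n * ∑ i ∈ range (n + 1), ∑ j ∈ range (n + 1), (x ^ min i j)⁻¹ =
      ((2 * n + 1) * x ^ (n + 2) - (2 * n + 3) * x ^ (n + 1) + x + 1) / (x - 1) ^ 2 := by
  have hx1' : x - 1 ≠ 0 := sub_ne_zero.mpr hx1
  induction n with
  | zero =>
    simp only [zero_add, range_one, sum_singleton, min_self, pow_zero, one_mul, inv_one]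
    field_simp
    ring
  | succ n ih =>
    have geom : ∑ i ∈ range (n + 1), (x ^ i)⁻¹ = (x ^ (n + 1) - 1) / ((x - 1) * x ^ n) := by
      simp only [← inv_pow, geom_sum_inv hx1 hx0]
      rw [inv_pow]
      field_simp
      ring
    rw [sum_range_succ_sum_range_succ_min (fun k => (x ^ k)⁻¹), geom, nsmul_eq_mul]
    rw [mul_comm, ← eq_div_iff (pow_ne_zero n hx0)] at ih
    rw [ih]
    field_simp
    push_cast
    ring

/-- `g` is multiplicative, and for a prime `p` and `α ≥ 1`,
`g(p^α) = ((2α+1)p^{α+2} − (2α+3)p^{α+1} + p + 1)/(p−1)²`. -/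
theorem gfun_multiplicative_and_prime_pow :
    (∀ a b : ℕ, 0 < a → 0 < b → Nat.gcd a b = 1 → gfun (a * b) = gfun a * gfun b) ∧
    (∀ p α : ℕ, p.Prime → 1 ≤ α →
      gfun (p ^ α) =
        ((2 * (α : ℚ) + 1) * (p : ℚ) ^ (α + 2) - (2 * (α : ℚ) + 3) * (p : ℚ) ^ (α + 1)
            + (p : ℚ) + 1) / ((p : ℚ) - 1) ^ 2) := by
  refine ⟨fun a b _ _ hab => ?_, fun p α hp _ => ?_⟩
  · have hsum := Nat.Coprime.sum_divisors_sum_divisors_mul hab (fun r s => 1 / (r.gcd s : ℚ))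
      fun r₁ hr₁ s₁ hs₁ r₂ hr₂ s₂ hs₂ => by
        rw [Nat.Coprime.gcd_mul_mul_of_dvd hab (Nat.dvd_of_mem_divisors hr₁)
          (Nat.dvd_of_mem_divisors hs₁) (Nat.dvd_of_mem_divisors hr₂)
          (Nat.dvd_of_mem_divisors hs₂), Nat.cast_mul, one_div_mul_one_div]
    rw [gfun, gfun, gfun, hsum, Nat.cast_mul]
    ring
  · have hp0 : (p : ℚ) ≠ 0 := Nat.cast_ne_zero.mpr hp.ne_zero
    have hp1 : (p : ℚ) ≠ 1 := Nat.cast_ne_one.mpr hp.ne_one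
    simp only [gfun, Nat.sum_divisors_prime_pow hp, Nat.gcd_pow_pow, Nat.cast_pow, one_div]
    exact pow_mul_sum_range_sum_range_inv_pow_min hp0 hp1 α
end
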